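/- For every subset S of the vertices of an ADMG G(V), there exists a reachable set ⟨S⟩ with S ⊆ ⟨S⟩ such that ⟨S⟩ ⊆ T for every reachable set T with S ⊆ T; in particular, a unique smallest reachable superset of S (the reachable closure of S) exists. -/

import Mathlib

/-- A conditional acyclic directed mixed graph (CADMG) on vertex type `V`:
a directed edge relation `dir` with no directed cycles, a symmetric irreflexive
bidirected edge relation `bi`, and a set `rnd` of random vertices (the remaining
vertices being fixed), such that no directed edge points into a fixed vertex and
no bidirected edge is incident to a fixed vertex.  An ADMG is the special case
`rnd = Set.univ`. -/
structure CADMG (V : Type*) where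
  dir : V → V → Prop
  bi : V → V → Prop
  rnd : Set V
  acyclic : ∀ v, ¬ Relation.TransGen dir v v
  bi_symm : ∀ a b, bi a b → bi b a
  bi_irrefl : ∀ a, ¬ bi a a
  dir_rnd : ∀ a b, dir a b → b ∈ rnd
  bi_rnd : ∀ a b, bi a b → a ∈ rnd ∧ b ∈ rnd

namespace CADMG

variable {V : Type*}

/-- A random vertex `r` is fixable if there is no other vertex `w` with both a
directed path from `r` to `w` and a bidirected path from `r` to `w`. -/
def Fixable (G : CADMG V) (r : V) : Prop :=
  r ∈ G.rnd ∧
    ¬ ∃ w, w ≠ r ∧ Relation.ReflTransGen G.dir r w ∧ Relation.ReflTransGen G.bi r w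

/-- The fixing operator: move `r` from the random to the fixed vertices and delete
all directed edges into `r` and all bidirected edges incident to `r`. -/
def fix (G : CADMG V) (r : V) : CADMG V where
  dir a b := G.dir a b ∧ b ≠ r
  bi a b := G.bi a b ∧ a ≠ r ∧ b ≠ r
  rnd := G.rnd \ {r}
  acyclic v h := G.acyclic v (Relation.TransGen.mono (p := G.dir) (fun _ _ hab => hab.1) v v h)
  bi_symm a b h := ⟨G.bi_symm a b h.1, h.2.2, h.2.1⟩
  bi_irrefl a h := G.bi_irrefl a h.1
  dir_rnd a b h := ⟨G.dir_rnd a b h.1, h.2⟩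
  bi_rnd a b h := ⟨⟨(G.bi_rnd a b h.1).1, h.2.1⟩, (G.bi_rnd a b h.1).2, h.2.2⟩

/-- A sequence of vertices is a valid fixing sequence if it is empty, or its head is
fixable and its tail is valid in the graph obtained by fixing the head. -/
def Valid (G : CADMG V) : List V → Prop
  | [] => True
  | r :: rest => G.Fixable r ∧ (G.fix r).Valid rest

/-- `φ_σ(G)`: the CADMG obtained by applying the fixing operators along the list `σ`. -/
def fixList (G : CADMG V) : List V → CADMG V
  | [] => G
  | r :: rest => (G.fix r).fixList rest

/-- A set `R` of random vertices is reachable if some ordering of the remaining random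
vertices is a valid fixing sequence. -/
def Reachable (G : CADMG V) (R : Set V) : Prop :=
  ∃ σ : List V, G.Valid σ ∧ ∀ v, v ∈ σ ↔ v ∈ G.rnd \ R

/-- `C` is the reachable closure of `S`: the smallest reachable superset of `S`. -/
def IsReachableClosure (G : CADMG V) (S C : Set V) : Prop :=
  G.Reachable C ∧ S ⊆ C ∧ ∀ T, G.Reachable T → S ⊆ T → C ⊆ T

/-- `D` is bidirected-connected (within `D` itself): `D` is nonempty and any two of its
elements are joined by a bidirected path staying inside `D`. -/
def BiConnected (G : CADMG V) (D : Set V) : Prop :=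
  D.Nonempty ∧ ∀ a ∈ D, ∀ b ∈ D,
    Relation.ReflTransGen (fun x y => G.bi x y ∧ x ∈ D ∧ y ∈ D) a b

/-- An intrinsic set: reachable and bidirected-connected. -/
def Intrinsic (G : CADMG V) (R : Set V) : Prop :=
  G.Reachable R ∧ G.BiConnected R

/-- The induced subgraph on a set `W` of vertices (vertices outside `W` become fixed
and lose all their edges). -/
def induce (G : CADMG V) (W : Set V) : CADMG V where
  dir a b := G.dir a b ∧ a ∈ W ∧ b ∈ W
  bi a b := G.bi a b ∧ a ∈ W ∧ b ∈ W
  rnd := G.rnd ∩ W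
  acyclic v h := G.acyclic v (Relation.TransGen.mono (p := G.dir) (fun _ _ hab => hab.1) v v h)
  bi_symm a b h := ⟨G.bi_symm a b h.1, h.2.2, h.2.1⟩
  bi_irrefl a h := G.bi_irrefl a h.1
  dir_rnd a b h := ⟨G.dir_rnd a b h.1, h.2.2⟩
  bi_rnd a b h := ⟨⟨(G.bi_rnd a b h.1).1, h.2.1⟩, (G.bi_rnd a b h.1).2, h.2.2⟩

/-- The districts of a CADMG: the connected components of its random vertices under
the bidirected edge relation. -/
def District (G : CADMG V) (D : Set V) : Prop :=
  ∃ v ∈ G.rnd, D = {w | Relation.ReflTransGen G.bi v w}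

/-- `Y*`: the set of vertices having a directed path (possibly of length zero) to an
element of `Y` that does not intersect `A`. -/
def Ystar (G : CADMG V) (A Y : Set V) : Set V :=
  {v | ∃ y ∈ Y, Relation.ReflTransGen (fun a b => G.dir a b ∧ a ∉ A ∧ b ∉ A) v y}

/-- `F` is an `R`-rooted C-forest: `R ⊆ F`, `F` is bidirected-connected in the induced
subgraph `G_F`, and there is a subgraph of `G_F` with vertex set `F` and a subset `E` of
its directed edges in which every element of `F` has a directed path (possibly of
length zero) to an element of `R`. -/
def CForest (G : CADMG V) (R F : Set V) : Prop :=
  R ⊆ F ∧ G.BiConnected F ∧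
    ∃ E : V → V → Prop,
      (∀ a b, E a b → G.dir a b ∧ a ∈ F ∧ b ∈ F) ∧
      ∀ f ∈ F, ∃ r ∈ R, Relation.ReflTransGen E f r

/-- A hedge for `(Y, A)` in `G`: a pair `(F, F')` of `R`-rooted C-forests, for some common
root set `R`, with `F ⊊ F'`, `F ∩ A = ∅`, `A ∩ (F' \ F) ≠ ∅`, and every element of `R`
has a directed path to an element of `Y` that does not intersect `A`. -/
def Hedge (G : CADMG V) (Y A : Set V) : Prop :=
  ∃ R F F', G.CForest R F ∧ G.CForest R F' ∧ F ⊂ F' ∧ F ∩ A = ∅ ∧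
    (A ∩ (F' \ F)).Nonempty ∧
    ∀ r ∈ R, ∃ y ∈ Y, Relation.ReflTransGen (fun a b => G.dir a b ∧ a ∉ A ∧ b ∉ A) r y

end CADMG



/-!
Fixing a vertex only deletes edges, so a vertex that is fixable stays fixable after other
vertices are fixed, and fixing operations commute. Hence the vertices outside `S` can be fixed
greedily until none is fixable: any valid sequence avoiding `S` is contained in the greedy one
(an exchange argument), so the random vertices left unfixed, together with `S`, form the
smallest reachable superset of `S`.
-/

namespace CADMG

variable {V : Type*}

attribute [ext] CADMG

lemma fix_comm (G : CADMG V) (v w : V) : (G.fix v).fix w = (G.fix w).fix v := by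
  ext
  · simp only [fix]; tauto
  · simp only [fix]; tauto
  · simp only [fix, Set.mem_sdiff, Set.mem_singleton_iff]; tauto

lemma Fixable.fix_of_ne {G : CADMG V} {v w : V} (h : G.Fixable v) (hne : v ≠ w) :
    (G.fix w).Fixable v := by
  refine ⟨⟨h.1, hne⟩, ?_⟩
  rintro ⟨u, hu, hdir, hbi⟩
  exact h.2 ⟨u, hu, .mono (fun _ _ hab => hab.1) _ _ hdir, .mono (fun _ _ hab => hab.1) _ _ hbi⟩

lemma Fixable.fixList_of_notMem {G : CADMG V} {v : V} {τ : List V} (h : G.Fixable v)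
    (hv : v ∉ τ) : (G.fixList τ).Fixable v := by
  induction τ generalizing G with
  | nil => exact h
  | cons r t ih =>
    rw [List.mem_cons, not_or] at hv
    exact ih (h.fix_of_ne hv.1) hv.2

lemma Valid.subset_rnd {G : CADMG V} {τ : List V} (hτ : G.Valid τ) : ∀ v ∈ τ, v ∈ G.rnd := by
  induction τ generalizing G with
  | nil => simp
  | cons r t ih =>
    rintro v (_ | ⟨_, hv⟩)
    exacts [hτ.1.1, (ih hτ.2 v hv).1]

section Erase

variable [DecidableEq V]

lemma fix_fixList_erase {G : CADMG V} {τ : List V} {r : V} (hr : r ∈ τ) :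
    (G.fix r).fixList (τ.erase r) = G.fixList τ := by
  induction τ generalizing G with
  | nil => cases hr
  | cons h t ih =>
    rcases eq_or_ne h r with rfl | hne
    · rw [List.erase_cons_head]; rfl
    · rw [List.erase_cons_tail (by simpa using hne)]
      change ((G.fix r).fix h).fixList (t.erase r) = (G.fix h).fixList t
      rw [fix_comm]
      exact ih (List.mem_of_ne_of_mem hne.symm hr)

lemma Valid.fix_erase {G : CADMG V} {τ : List V} {r : V} (hτ : G.Valid τ) (hr : r ∈ τ) :
    (G.fix r).Valid (τ.erase r) := by
  induction τ generalizing G with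
  | nil => cases hr
  | cons h t ih =>
    rcases eq_or_ne h r with rfl | hne
    · rw [List.erase_cons_head]; exact hτ.2
    · rw [List.erase_cons_tail (by simpa using hne)]
      refine ⟨hτ.1.fix_of_ne hne, ?_⟩
      rw [fix_comm]
      exact ih hτ.2 (List.mem_of_ne_of_mem hne.symm hr)

/-- Exchange argument: the head of `σ` is fixable in `G`, hence still fixable after `τ` unless
it occurs in `τ`; moving it to the front of `τ` keeps `τ` valid and maximal, so the induction
continues in the graph where it is fixed. -/
lemma Valid.subset_of_maximal {S : Set V} {σ τ : List V} {G : CADMG V}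
    (hσ : G.Valid σ) (hσS : ∀ v ∈ σ, v ∉ S) (hτ : G.Valid τ)
    (hmax : ∀ v ∉ S, ¬ (G.fixList τ).Fixable v) : σ ⊆ τ := by
  induction σ generalizing G τ with
  | nil => exact List.nil_subset τ
  | cons r t ih =>
    have hrτ : r ∈ τ := by
      by_contra hrτ
      exact hmax r (hσS r List.mem_cons_self) (hσ.1.fixList_of_notMem hrτ)
    have htτ : t ⊆ τ.erase r := by
      refine ih hσ.2 (fun v hv => hσS v (List.mem_cons_of_mem r hv)) (hτ.fix_erase hrτ) ?_
      rwa [fix_fixList_erase hrτ]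
    exact List.cons_subset.mpr ⟨hrτ, fun v hv => List.mem_of_mem_erase (htτ hv)⟩

end Erase

lemma exists_valid_maximal (G : CADMG V) (hG : G.rnd.Finite) (S : Set V) :
    ∃ τ : List V, G.Valid τ ∧ (∀ v ∈ τ, v ∉ S) ∧ ∀ v ∉ S, ¬ (G.fixList τ).Fixable v := by
  by_cases hex : ∃ v ∉ S, G.Fixable v
  · obtain ⟨v, hvS, hv⟩ := hex
    have : (G.fix v).rnd.ncard < G.rnd.ncard := Set.ncard_sdiff_singleton_lt_of_mem hv.1 hG
    obtain ⟨τ, hτ, hτS, hmax⟩ := exists_valid_maximal (G.fix v) (hG.subset Set.sdiff_subset) S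
    refine ⟨v :: τ, ⟨hv, hτ⟩, ?_, hmax⟩
    rintro w (_ | ⟨_, hw⟩)
    exacts [hvS, hτS w hw]
  · push Not at hex
    exact ⟨[], trivial, by simp, hex⟩
termination_by G.rnd.ncard

theorem exists_isReachableClosure (G : CADMG V) (hG : G.rnd.Finite) (S : Set V) :
    ∃ C, G.IsReachableClosure S C := by
  classical
  obtain ⟨τ, hτ, hτS, hmax⟩ := exists_valid_maximal G hG S
  refine ⟨S ∪ (G.rnd \ {v | v ∈ τ}), ⟨τ, hτ, fun v => ?_⟩, Set.subset_union_left, ?_⟩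
  · by_cases hv : v ∈ τ <;> simp +contextual [hv, hτS v, hτ.subset_rnd v]
  · rintro T ⟨σ, hσ, hσT⟩ hST v (hvS | ⟨hv, hvτ⟩)
    · exact hST hvS
    · by_contra hvT
      have hσS : ∀ w ∈ σ, w ∉ S := fun w hw hwS => ((hσT w).mp hw).2 (hST hwS)
      exact hvτ (hσ.subset_of_maximal hσS hτ hmax ((hσT v).mpr ⟨hv, hvT⟩))

lemma IsReachableClosure.unique {G : CADMG V} {S C D : Set V} (hC : G.IsReachableClosure S C)
    (hD : G.IsReachableClosure S D) : C = D :=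
  (hC.2.2 D hD.1 hD.2.1).antisymm (hD.2.2 C hC.1 hC.2.1)

end CADMG

theorem reachable_closure_exists_unique_general
    {V : Type*} [Fintype V] (G : CADMG V) (S : Set V) :
    ∃! C : Set V, G.Reachable C ∧ S ⊆ C ∧
      ∀ T : Set V, G.Reachable T → S ⊆ T → C ⊆ T := by
  obtain ⟨C, hC⟩ := G.exists_isReachableClosure (Set.toFinite _) S
  exact ⟨C, hC, fun D hD => CADMG.IsReachableClosure.unique hD hC⟩

/-- For every subset `S` of the vertices of an ADMG `G`, there is a unique
smallest reachable superset of `S` (the reachable closure of `S`). -/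
theorem reachable_closure_exists_unique
    {V : Type*} [Fintype V] (G : CADMG V) (hG : G.rnd = Set.univ) (S : Set V) :
    ∃! C : Set V, G.Reachable C ∧ S ⊆ C ∧
      ∀ T : Set V, G.Reachable T → S ⊆ T → C ⊆ T :=
  reachable_closure_exists_unique_general G S
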